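/- There is a bijection Θ between the set [1_n] of connected non-crossing linked partitions of {1,...,n} and the set T(n) of planar rooted trees with n vertices, obtained by sending each block (i_1,...,i_s) of π to an elementary tree with root labeled i_1 and offsprings labeled i_2,...,i_s, where vertices of the tree are labeled 1,...,n in depth-first (left-first) order. -/

import Mathlib

open scoped Classical


/-- Two blocks `B`, `C` cross: there are `i < k < p < q` with `i, p ∈ B` and `k, q ∈ C`. -/
def Crosses {n : ℕ} (B C : Finset (Fin n)) : Prop :=
  ∃ i k p q : Fin n, i < k ∧ k < p ∧ p < q ∧ i ∈ B ∧ p ∈ B ∧ k ∈ C ∧ q ∈ C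

/-- `π` is a non-crossing linked partition of `{1, …, n}` (encoded as `Fin n`):
its (nonempty) blocks cover `Fin n`, are pairwise non-crossing, any two distinct blocks
intersect in at most one element, and if two distinct blocks intersect in `{j}` then both
blocks have at least two elements and `j` is the minimal element of exactly one of them. -/
def IsNCL (n : ℕ) (π : Finset (Finset (Fin n))) : Prop :=
  (∀ B ∈ π, B.Nonempty) ∧
  (∀ x : Fin n, ∃ B ∈ π, x ∈ B) ∧
  (∀ B ∈ π, ∀ C ∈ π, B ≠ C → ¬ Crosses B C) ∧
  (∀ B ∈ π, ∀ C ∈ π, B ≠ C → (B ∩ C).card ≤ 1 ∧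
    ∀ j : Fin n, B ∩ C = {j} →
      2 ≤ B.card ∧ 2 ≤ C.card ∧
        Xor' (B.min = (j : WithBot (Fin n))) (C.min = (j : WithBot (Fin n))))

/-- `π` is a non-crossing partition: a non-crossing linked partition with pairwise
disjoint blocks. -/
def IsNC (n : ℕ) (π : Finset (Finset (Fin n))) : Prop :=
  IsNCL n π ∧ ∀ B ∈ π, ∀ C ∈ π, B ≠ C → Disjoint B C

/-- `Refines n σ π` (i.e. `σ ⪯ π`): every block of `π` is a union of blocks of `σ`. -/
def Refines (n : ℕ) (σ π : Finset (Finset (Fin n))) : Prop :=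
  ∀ B ∈ π, ∃ S : Finset (Finset (Fin n)), S ⊆ σ ∧ B = S.sup id

/-- `a` and `b` lie in a common block of `π`. -/
def Linked {n : ℕ} (π : Finset (Finset (Fin n))) (a b : Fin n) : Prop :=
  ∃ B ∈ π, a ∈ B ∧ b ∈ B

/-- `a` and `b` are connected in `π`: joined by a chain of pairwise intersecting blocks. -/
def Connected {n : ℕ} (π : Finset (Finset (Fin n))) (a b : Fin n) : Prop :=
  Relation.ReflTransGen (Linked π) a b

/-- The partition `c(π)` of `Fin n` into the connected components of `π`. -/
noncomputable def cPart (n : ℕ) (π : Finset (Finset (Fin n))) : Finset (Finset (Fin n)) :=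
  Finset.univ.image fun i => Finset.univ.filter (Connected π i)

/-- Embedding of the unbarred copy: `i ↦ 2 i` in the interleaved order
`1, 1̄, 2, 2̄, …, n, n̄`. -/
def ueEmb (n : ℕ) (i : Fin n) : Fin (2 * n) := ⟨2 * i.1, by have := i.isLt; omega⟩

/-- Embedding of the barred copy: `i ↦ 2 i + 1` in the interleaved order. -/
def beEmb (n : ℕ) (i : Fin n) : Fin (2 * n) := ⟨2 * i.1 + 1, by have := i.isLt; omega⟩

/-- The union `γ ∪ γ'` inside the interleaved ordered set `1, 1̄, 2, 2̄, …, n, n̄`. -/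
def interleave (n : ℕ) (γ γ' : Finset (Finset (Fin n))) : Finset (Finset (Fin (2 * n))) :=
  γ.image (Finset.image (ueEmb n)) ∪ γ'.image (Finset.image (beEmb n))

/-- `γ'` is the Kreweras complement of `γ`: the largest non-crossing partition (in the
refinement order) such that `γ ∪ γ'` is non-crossing in the interleaved order. -/
def IsKr (n : ℕ) (γ γ' : Finset (Finset (Fin n))) : Prop :=
  IsNC n γ' ∧ IsNC (2 * n) (interleave n γ γ') ∧
  ∀ τ, IsNC n τ → IsNC (2 * n) (interleave n γ τ) → Refines n τ γ'

/-- `B` is an exterior block of `γ`: no other block `D` of `γ` contains elements `l, s`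
with `l = min B`, or `l < min B` and `max B < s`. -/
def IsExteriorIn (n : ℕ) (γ : Finset (Finset (Fin n))) (B : Finset (Fin n)) : Prop :=
  B ∈ γ ∧ ∀ D ∈ γ, D ≠ B → ∀ l ∈ D, ∀ s ∈ D,
    ¬((l ∈ B ∧ ∀ b ∈ B, l ≤ b) ∨ (∀ b ∈ B, l < b ∧ b < s))

/-- Halving map `Fin (2n) → Fin n`. -/
def halfEmb (n : ℕ) (i : Fin (2 * n)) : Fin n := ⟨i.1 / 2, by have := i.isLt; omega⟩

/-- `γ₋`: the restriction of `γ ∈ NC(2n)` to the odd elements `{1, 3, …, 2n − 1}`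
(indices `≡ 0 mod 2` in the `0`-based encoding), identified with a partition of `Fin n`. -/
noncomputable def minusPart (n : ℕ) (γ : Finset (Finset (Fin (2 * n)))) :
    Finset (Finset (Fin n)) :=
  (γ.filter fun B => ∀ i ∈ B, i.1 % 2 = 0).image (Finset.image (halfEmb n))

/-- `γ₊`: the restriction of `γ ∈ NC(2n)` to the even elements `{2, 4, …, 2n}`,
identified with a partition of `Fin n`. -/
noncomputable def plusPart (n : ℕ) (γ : Finset (Finset (Fin (2 * n)))) :
    Finset (Finset (Fin n)) :=
  (γ.filter fun B => ∀ i ∈ B, i.1 % 2 = 1).image (Finset.image (halfEmb n))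

/-- `γ ∈ NC_s(2n)`: a non-crossing partition of `{1, …, 2n}` all of whose blocks have
elements of constant parity, with `γ₊ = Kr(γ₋)`. -/
def NCs (n : ℕ) (γ : Finset (Finset (Fin (2 * n)))) : Prop :=
  IsNC (2 * n) γ ∧
  (∀ B ∈ γ, (∀ i ∈ B, i.1 % 2 = 0) ∨ (∀ i ∈ B, i.1 % 2 = 1)) ∧
  IsKr n (minusPart n γ) (plusPart n γ)

/-- The restriction of `γ` to a subset `S`. -/
noncomputable def restrictTo (n : ℕ) (γ : Finset (Finset (Fin n))) (S : Finset (Fin n)) :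
    Finset (Finset (Fin n)) :=
  (γ.image fun B => B ∩ S).filter Finset.Nonempty

/-- A planar rooted tree: a root together with a linearly ordered (left to right) list of
subtrees. -/
inductive PTree where
  | node : List PTree → PTree

mutual
/-- Number of vertices of a planar rooted tree. -/
def PTree.size : PTree → ℕ
  | .node ts => 1 + sizeList ts
def sizeList : List PTree → ℕ
  | [] => 0
  | t :: ts => PTree.size t + sizeList ts
end

/-- Depth-first indices of the roots of a list of trees, the first root getting index `k`. -/
def childRoots : List PTree → ℕ → List ℕ
  | [], _ => []
  | t :: ts, k => k :: childRoots ts (k + PTree.size t)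

mutual
/-- The blocks of the constituent elementary trees (a root together with its offsprings,
provided there is at least one offspring) of a planar tree, with vertices numbered in
depth-first (left-first) order starting at `k`. -/
def PTree.blk : PTree → ℕ → List (List ℕ)
  | .node ts, k =>
      (if ts.isEmpty then [] else [k :: childRoots ts (k + 1)]) ++ blkList ts (k + 1)
def blkList : List PTree → ℕ → List (List ℕ)
  | [], _ => []
  | t :: ts, k => PTree.blk t k ++ blkList ts (k + PTree.size t)
end

/-- The blocks of the elementary trees constituting a planar tree, in depth-first
numbering starting at `0`; a single vertex is itself an elementary tree. -/
def treeBlocks : PTree → List (List ℕ)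
  | .node [] => [[0]]
  | t => t.blk 0

/-- Convert a list of (`0`-based) vertex numbers into a block of `Fin n`. -/
def listToBlock (n : ℕ) (l : List ℕ) : Finset (Fin n) :=
  (l.filterMap fun i => if h : i < n then some (⟨i, h⟩ : Fin n) else none).toFinset

mutual
/-- Evaluation of a planar rooted tree: the product over its vertices of `f k`, where `k`
is the number of offsprings of the vertex (so an elementary tree with `m` vertices
contributes `f (m − 1)`). -/
def PTree.eval (f : ℕ → ℂ) : PTree → ℂ
  | .node ts => f ts.length * evalList f ts
def evalList (f : ℕ → ℂ) : List PTree → ℂ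
  | [] => 1
  | t :: ts => PTree.eval f t * evalList f ts
end

/-- A bicolor planar rooted tree: each subtree carries a color (`true` = color 1,
`false` = color 0). -/
inductive BTree where
  | node : List (Bool × BTree) → BTree

mutual
/-- Number of vertices of a bicolor planar tree. -/
def BTree.size : BTree → ℕ
  | .node ts => 1 + bsizeList ts
def bsizeList : List (Bool × BTree) → ℕ
  | [] => 0
  | (_, t) :: ts => BTree.size t + bsizeList ts
end

mutual
/-- Validity of a bicolor planar tree: at every vertex, the offsprings of color 1 precede
the offsprings of color 0. -/
def BTree.Valid : BTree → Prop
  | .node ts => List.Chain' (fun a b => b ≤ a) (ts.map Prod.fst) ∧ bvalidList ts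
def bvalidList : List (Bool × BTree) → Prop
  | [] => True
  | (_, t) :: ts => BTree.Valid t ∧ bvalidList ts
end

/-- A bicolor tree is elementary when all offsprings of the root are leaves. -/
def BTree.IsElementary : BTree → Prop
  | .node ts => ∀ p ∈ ts, p.2 = BTree.node []
/-- The term `t_π[X_1, …, X_n]`: the product over blocks `B = (i_1 < … < i_l)` of `π` of
`t_{l−1}(X_{i_1}, …, X_{i_l})`, times the product over `k ∈ s(π)` (the elements that are
not the minimal element of any block) of `t_0(X_k)`. Here `t m` stands for `t_{m−1}`,
taking `m` arguments. -/
noncomputable def tTerm {A : Type*} [Ring A] (t : ∀ m : ℕ, (Fin m → A) → ℂ)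
    (n : ℕ) (π : Finset (Finset (Fin n))) (X : Fin n → A) : ℂ :=
  (∏ B ∈ π, t B.card fun j => X (B.orderIsoOfFin rfl j).1) *
  ∏ k ∈ Finset.univ.filter
      (fun k : Fin n => ∀ B ∈ π, B.min ≠ (k : WithBot (Fin n))),
    t 1 fun _ => X k

/-- The family `t` satisfies the defining recurrence of the `t`-coefficients:
`φ(X_1 ⋯ X_n) = Σ_{π ∈ NCL(n)} t_π[X_1, …, X_n]`. -/
def TRec {A : Type*} [Ring A] [Algebra ℂ A] (φ : A →ₗ[ℂ] ℂ)
    (t : ∀ m : ℕ, (Fin m → A) → ℂ) : Prop :=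
  ∀ (n : ℕ) (X : Fin (n + 1) → A),
    φ (List.ofFn X).prod =
      ∑ π ∈ Finset.univ.filter (fun π => IsNCL (n + 1) π), tTerm t (n + 1) π X

/-- The term `κ_γ[X_1, …, X_n]`: the product over blocks `B = (i_1 < … < i_l)` of `γ` of
`κ_l(X_{i_1}, …, X_{i_l})`. -/
noncomputable def cumTerm {A : Type*} [Ring A] (κ : ∀ m : ℕ, (Fin m → A) → ℂ)
    (n : ℕ) (γ : Finset (Finset (Fin n))) (X : Fin n → A) : ℂ :=
  ∏ B ∈ γ, κ B.card fun j => X (B.orderIsoOfFin rfl j).1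

/-- The family `κ` satisfies the moment–cumulant recurrence
`φ(X_1 ⋯ X_n) = Σ_{γ ∈ NC(n)} κ_γ[X_1, …, X_n]` defining the free cumulants. -/
def CumRec {A : Type*} [Ring A] [Algebra ℂ A] (φ : A →ₗ[ℂ] ℂ)
    (κ : ∀ m : ℕ, (Fin m → A) → ℂ) : Prop :=
  ∀ (n : ℕ) (X : Fin (n + 1) → A),
    φ (List.ofFn X).prod =
      ∑ γ ∈ Finset.univ.filter (fun γ => IsNC (n + 1) γ), cumTerm κ (n + 1) γ X

/-- Free independence of a family of unital subalgebras: alternating products of centered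
elements have vanishing expectation. -/
def FreeFamily {A : Type*} [Ring A] [Algebra ℂ A] (φ : A →ₗ[ℂ] ℂ) {I : Type*}
    (S : I → Subalgebra ℂ A) : Prop :=
  ∀ (n : ℕ) (a : Fin (n + 1) → A) (idx : Fin (n + 1) → I),
    (∀ k, a k ∈ S (idx k)) → (∀ k, φ (a k) = 0) →
    (∀ k : Fin n, idx k.castSucc ≠ idx k.succ) →
    φ (List.ofFn a).prod = 0

/-- Two elements are free if the unital subalgebras they generate are free. -/
def FreePair {A : Type*} [Ring A] [Algebra ℂ A] (φ : A →ₗ[ℂ] ℂ) (X Y : A) : Prop :=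
  FreeFamily φ fun b : Bool =>
    if b = true then Algebra.adjoin ℂ {X} else Algebra.adjoin ℂ {Y}


/-!
At the level of `ℕ`, the subtrees of a vertex numbered `k` occupy consecutive intervals
after `k`: the root block of `T.blk k` consists of `k` and the first vertices of these
intervals, and every other block lies inside one of them. This makes the blocks a connected
non-crossing linked partition, and the tree can be read back from them, since the root block
is the only block containing the root and, sorted, it lists where the subtree intervals start.

Conversely, in a connected non-crossing linked partition of `[a, a + N)` the block `B₀`
containing `a` also contains `a + 1`, and no other block straddles an element of `B₀`.
Hence the elements of `B₀ \ {a}` cut `[a + 1, a + N)` into intervals, each of which is a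
single vertex or carries a connected non-crossing linked partition of its own, and induction
on `N` rebuilds the tree with root block `B₀`.
-/

open Finset

def NatCrosses (B C : Finset ℕ) : Prop :=
  ∃ i k p q : ℕ, i < k ∧ k < p ∧ p < q ∧ i ∈ B ∧ p ∈ B ∧ k ∈ C ∧ q ∈ C

def NatLinked (Γ : Finset (Finset ℕ)) (a b : ℕ) : Prop :=
  ∃ B ∈ Γ, a ∈ B ∧ b ∈ B

def NatConnected (Γ : Finset (Finset ℕ)) : ℕ → ℕ → Prop :=
  Relation.ReflTransGen (NatLinked Γ)

namespace NatConnected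

variable {Γ Δ : Finset (Finset ℕ)} {x y : ℕ}

lemma mono (h : Γ ⊆ Δ) (hxy : NatConnected Γ x y) : NatConnected Δ x y :=
  Relation.ReflTransGen.mono (fun _ _ ⟨B, hB, hu, hv⟩ => ⟨B, h hB, hu, hv⟩) x y hxy

lemma symm (h : NatConnected Γ x y) : NatConnected Γ y x :=
  have : Std.Symm (NatLinked Γ) := ⟨fun _ _ ⟨B, hB, hu, hv⟩ => ⟨B, hB, hv, hu⟩⟩
  Std.Symm.symm (r := Relation.ReflTransGen (NatLinked Γ)) _ _ h

lemma exists_mem_of_ne (h : NatConnected Γ x y) (hxy : x ≠ y) : ∃ B ∈ Γ, x ∈ B := by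
  rcases h.cases_head with rfl | ⟨z, ⟨B, hB, hx, -⟩, -⟩
  · exact absurd rfl hxy
  · exact ⟨B, hB, hx⟩

lemma of_closed {P : ℕ → Prop} (hP : ∀ B ∈ Γ, ∀ u ∈ B, ∀ v ∈ B, P u → P v)
    (h : NatConnected Γ x y) (hx : P x) : P y := by
  induction h with
  | refl => exact hx
  | tail _ huv ih => obtain ⟨B, hB, hu, hv⟩ := huv; exact hP B hB _ hu _ hv ih

end NatConnected

structure IsConnNCL (a N : ℕ) (Γ : Finset (Finset ℕ)) : Prop where
  nonempty : ∀ B ∈ Γ, B.Nonempty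
  subset_Ico : ∀ B ∈ Γ, B ⊆ Ico a (a + N)
  cover : ∀ x ∈ Ico a (a + N), ∃ B ∈ Γ, x ∈ B
  not_crosses : ∀ B ∈ Γ, ∀ C ∈ Γ, B ≠ C → ¬ NatCrosses B C
  card_inter_le_one : ∀ B ∈ Γ, ∀ C ∈ Γ, B ≠ C → #(B ∩ C) ≤ 1
  inter_eq_singleton : ∀ B ∈ Γ, ∀ C ∈ Γ, B ≠ C → ∀ j, B ∩ C = {j} →
    2 ≤ #B ∧ 2 ≤ #C ∧ Xor (IsLeast ↑B j) (IsLeast ↑C j)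
  connected : ∀ x ∈ Ico a (a + N), ∀ y ∈ Ico a (a + N), NatConnected Γ x y

/-! ### The blocks of a planar tree -/

def blockSet (S : List (List ℕ)) : Finset (Finset ℕ) :=
  (S.map List.toFinset).toFinset

@[simp] lemma mem_blockSet {B : Finset ℕ} {S : List (List ℕ)} :
    B ∈ blockSet S ↔ ∃ l ∈ S, l.toFinset = B := by
  simp [blockSet]

@[simp] lemma blockSet_nil : blockSet [] = ∅ := rfl

@[simp] lemma blockSet_append (S S' : List (List ℕ)) :
    blockSet (S ++ S') = blockSet S ∪ blockSet S' := by
  simp [blockSet]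

@[simp] lemma blockSet_cons (l : List ℕ) (S : List (List ℕ)) :
    blockSet (l :: S) = insert l.toFinset (blockSet S) := by
  simp [blockSet]

@[simp] lemma PTree.size_node (ts : List PTree) : (PTree.node ts).size = 1 + sizeList ts := by
  simp [PTree.size]

@[simp] lemma sizeList_nil : sizeList [] = 0 := by simp [sizeList]

@[simp] lemma sizeList_cons (t : PTree) (ts : List PTree) :
    sizeList (t :: ts) = t.size + sizeList ts := by simp [sizeList]

lemma PTree.one_le_size (T : PTree) : 1 ≤ T.size := by
  cases T; simp

@[simp] lemma childRoots_nil (k : ℕ) : childRoots [] k = [] := rfl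

@[simp] lemma childRoots_cons (t : PTree) (ts : List PTree) (k : ℕ) :
    childRoots (t :: ts) k = k :: childRoots ts (k + t.size) := rfl

@[simp] lemma PTree.blk_leaf (k : ℕ) : (PTree.node []).blk k = [] := by
  simp [PTree.blk, blkList]

@[simp] lemma PTree.blk_node_cons (t : PTree) (ts : List PTree) (k : ℕ) :
    (PTree.node (t :: ts)).blk k =
      (k :: childRoots (t :: ts) (k + 1)) :: blkList (t :: ts) (k + 1) := by
  rw [PTree.blk]; simp

@[simp] lemma blkList_nil (k : ℕ) : blkList [] k = [] := by simp [blkList]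

@[simp] lemma blkList_cons (t : PTree) (ts : List PTree) (k : ℕ) :
    blkList (t :: ts) k = t.blk k ++ blkList ts (k + t.size) := by simp [blkList]

lemma bounds_of_mem_childRoots {ts : List PTree} {k c : ℕ} (h : c ∈ childRoots ts k) :
    k ≤ c ∧ c < k + sizeList ts := by
  induction ts generalizing k with
  | nil => simp at h
  | cons t ts ih =>
    have := t.one_le_size
    rcases List.mem_cons.1 h with rfl | h
    · simp; omega
    · have := ih h; simp; omega

lemma pairwise_childRoots (ts : List PTree) (k : ℕ) : (childRoots ts k).Pairwise (· < ·) := by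
  induction ts generalizing k with
  | nil => simp
  | cons t ts ih =>
    refine List.pairwise_cons.2 ⟨fun c hc => ?_, ih _⟩
    have := (bounds_of_mem_childRoots hc).1
    have := t.one_le_size
    omega

mutual
theorem subset_Ico_of_mem_blk : ∀ (T : PTree) (k : ℕ), ∀ B ∈ blockSet (T.blk k),
    B ⊆ Ico k (k + T.size)
  | .node [], k => by simp
  | .node (t :: ts), k => by
    have := subset_Ico_of_mem_blkList (t :: ts) (k + 1)
    intro B hB x hx
    simp only [PTree.blk_node_cons, blockSet_cons, mem_insert] at hB
    simp only [PTree.size_node, mem_Ico]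
    rcases hB with rfl | hB
    · rcases List.mem_cons.1 (List.mem_toFinset.1 hx) with rfl | hx
      · omega
      · have := bounds_of_mem_childRoots hx; omega
    · have := mem_Ico.1 (this B hB hx); omega
theorem subset_Ico_of_mem_blkList : ∀ (ts : List PTree) (k : ℕ), ∀ B ∈ blockSet (blkList ts k),
    B ⊆ Ico k (k + sizeList ts)
  | [], k => by simp
  | t :: ts, k => by
    have h₁ := subset_Ico_of_mem_blk t k
    have h₂ := subset_Ico_of_mem_blkList ts (k + t.size)
    intro B hB x hx
    simp only [sizeList_cons, mem_Ico]
    rw [blkList_cons, blockSet_append, mem_union] at hB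
    rcases hB with hB | hB
    · have := mem_Ico.1 (h₁ B hB hx); omega
    · have := mem_Ico.1 (h₂ B hB hx); omega
end

lemma exists_gap_of_mem_blkList {ts : List PTree} {k : ℕ} {B : Finset ℕ}
    (hB : B ∈ blockSet (blkList ts k)) :
    ∃ r ∈ childRoots ts k, r ∈ lowerBounds (B : Set ℕ) ∧
      ∀ x ∈ childRoots ts k, r < x → ∀ y ∈ B, y < x := by
  induction ts generalizing k with
  | nil => simp at hB
  | cons t ts ih =>
    simp only [childRoots_cons, List.mem_cons, forall_eq_or_imp]
    rw [blkList_cons, blockSet_append, mem_union] at hB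
    rcases hB with hB | hB
    · have hb := subset_Ico_of_mem_blk t k B hB
      refine ⟨k, .inl rfl, fun y hy => (mem_Ico.1 (hb hy)).1, by omega, fun x hx _ y hy => ?_⟩
      have := (bounds_of_mem_childRoots hx).1
      have := (mem_Ico.1 (hb hy)).2
      omega
    · obtain ⟨r, hr, hrB, hgap⟩ := ih hB
      have := (bounds_of_mem_childRoots hr).1
      exact ⟨r, .inr hr, hrB, by omega, hgap⟩

def LinkedPair (B C : Finset ℕ) : Prop :=
  (∀ j ∈ B, j ∈ C → Xor (IsLeast ↑B j) (IsLeast ↑C j)) ∧ ¬ NatCrosses B C ∧ ¬ NatCrosses C B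

instance : Std.Symm LinkedPair := ⟨fun _ _ ⟨h, h₁, h₂⟩ =>
  ⟨fun j hC hB => (xor_comm _ _).mp (h j hB hC), h₂, h₁⟩⟩

lemma linkedPair_of_lt {B C : Finset ℕ} (h : ∀ x ∈ B, ∀ y ∈ C, x < y) : LinkedPair B C := by
  refine ⟨fun j hB hC => absurd (h j hB j hC) (lt_irrefl j), ?_, ?_⟩
  · rintro ⟨i, k, p, q, -, hkp, -, -, hp, hk, -⟩
    exact absurd (h p hp k hk) (by omega)
  · rintro ⟨i, k, p, q, hik, -, -, hi, -, hk, -⟩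
    exact absurd (h k hk i hi) (by omega)

/-- `R` is the block of a vertex `k` and its offsprings, and `C` is a block of the subtree of
the offspring `r`: the other offsprings lie either before `r` or after all of `C`. -/
lemma linkedPair_of_gap {R C : Finset ℕ} {k r : ℕ} (hk : IsLeast ↑R k) (hkC : ∀ y ∈ C, k < y)
    (hr : r ∈ lowerBounds (C : Set ℕ)) (hgap : ∀ x ∈ R, r < x → ∀ y ∈ C, y < x) :
    LinkedPair R C := by
  refine ⟨fun j hR hC => ?_, ?_, ?_⟩
  · have hjr : j = r := le_antisymm (not_lt.1 fun h => lt_irrefl j (hgap j hR h j hC)) (hr hC)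
    refine Or.inr ⟨⟨hC, hjr ▸ hr⟩, fun hj => ?_⟩
    exact absurd (hkC j hC) (by rw [hk.unique hj]; exact lt_irrefl j)
  · rintro ⟨i, k', p, q, -, hkp, hpq, -, hp, hk', hq⟩
    exact absurd (hgap p hp (lt_of_le_of_lt (hr hk') hkp) q hq) (by omega)
  · rintro ⟨i, k', p, q, hik, hkp, -, hi, hp, hk', -⟩
    exact absurd (hgap k' hk' (lt_of_le_of_lt (hr hi) hik) p hp) (by omega)

lemma LinkedPair.card_inter_le_one {B C : Finset ℕ} (h : LinkedPair B C) : #(B ∩ C) ≤ 1 := by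
  refine card_le_one.2 fun x hx y hy => ?_
  rw [mem_inter] at hx hy
  rcases h.1 x hx.1 hx.2 with ⟨hxB, -⟩ | ⟨hxC, -⟩ <;>
    rcases h.1 y hy.1 hy.2 with ⟨hyB, -⟩ | ⟨hyC, -⟩
  · exact hxB.unique hyB
  · exact le_antisymm (hxB.2 hy.1) (hyC.2 hx.2)
  · exact le_antisymm (hxC.2 hy.2) (hyB.2 hx.1)
  · exact hxC.unique hyC

structure IsLinkedFamily (Δ : Finset (Finset ℕ)) : Prop where
  two_le_card : ∀ B ∈ Δ, 2 ≤ #B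
  pairwise : (Δ : Set (Finset ℕ)).Pairwise LinkedPair

lemma IsLinkedFamily.nonempty {Δ : Finset (Finset ℕ)} (h : IsLinkedFamily Δ) {B : Finset ℕ}
    (hB : B ∈ Δ) : B.Nonempty :=
  card_pos.1 (by have := h.two_le_card B hB; omega)

lemma isLinkedFamily_empty : IsLinkedFamily ∅ := ⟨by simp, by simp⟩

lemma IsLinkedFamily.union {Δ₁ Δ₂ : Finset (Finset ℕ)} (h₁ : IsLinkedFamily Δ₁)
    (h₂ : IsLinkedFamily Δ₂) (hlt : ∀ B ∈ Δ₁, ∀ C ∈ Δ₂, ∀ x ∈ B, ∀ y ∈ C, x < y) :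
    IsLinkedFamily (Δ₁ ∪ Δ₂) where
  two_le_card B hB := (mem_union.1 hB).elim (h₁.two_le_card B) (h₂.two_le_card B)
  pairwise := by
    rw [coe_union, Set.pairwise_union_of_symm]
    exact ⟨h₁.pairwise, h₂.pairwise, fun B hB C hC _ => linkedPair_of_lt (hlt B hB C hC)⟩

mutual
theorem isLinkedFamily_blk : ∀ (T : PTree) (k : ℕ), IsLinkedFamily (blockSet (T.blk k))
  | .node [], k => by simpa using isLinkedFamily_empty
  | .node (t :: ts), k => by
    have hΔ := isLinkedFamily_blkList (t :: ts) (k + 1)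
    have hb := subset_Ico_of_mem_blkList (t :: ts) (k + 1)
    set R := (k :: childRoots (t :: ts) (k + 1)).toFinset
    have hR : ∀ x ∈ R, x = k ∨ x ∈ childRoots (t :: ts) (k + 1) := by simp [R]
    have hk : IsLeast ↑R k := by
      refine ⟨by simp [R], fun x hx => ?_⟩
      rcases hR x hx with rfl | hx
      · exact le_rfl
      · exact ((bounds_of_mem_childRoots hx).1).trans' (Nat.le_succ k)
    have hcard : 2 ≤ #R := one_lt_card.2 ⟨k, by simp [R], k + 1, by simp [R], by omega⟩
    rw [PTree.blk_node_cons, blockSet_cons]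
    refine ⟨fun B hB => ?_, ?_⟩
    · rcases mem_insert.1 hB with rfl | hB
      exacts [hcard, hΔ.two_le_card B hB]
    rw [coe_insert, Set.pairwise_insert_of_symm]
    refine ⟨hΔ.pairwise, fun C hC _ => ?_⟩
    obtain ⟨r, hr, hrC, hgap⟩ := exists_gap_of_mem_blkList hC
    refine linkedPair_of_gap hk (fun y hy => ?_) hrC (fun x hx hrx => ?_)
    · have := (mem_Ico.1 (hb C hC hy)).1; omega
    · rcases hR x hx with rfl | hx
      · have := (bounds_of_mem_childRoots hr).1; omega
      · exact hgap x hx hrx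
theorem isLinkedFamily_blkList : ∀ (ts : List PTree) (k : ℕ),
    IsLinkedFamily (blockSet (blkList ts k))
  | [], k => by simpa using isLinkedFamily_empty
  | t :: ts, k => by
    rw [blkList_cons, blockSet_append]
    refine (isLinkedFamily_blk t k).union (isLinkedFamily_blkList ts (k + t.size))
      fun B hB C hC x hx y hy => ?_
    have := (mem_Ico.1 (subset_Ico_of_mem_blk t k B hB hx)).2
    have := (mem_Ico.1 (subset_Ico_of_mem_blkList ts _ C hC hy)).1
    omega
end

mutual
theorem natConnected_blk : ∀ (T : PTree) (k : ℕ), ∀ x, k ≤ x → x < k + T.size →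
    NatConnected (blockSet (T.blk k)) x k
  | .node [], k => fun x h₁ h₂ => by
    obtain rfl : x = k := by simp at h₂; omega
    exact .refl
  | .node (t :: ts), k => fun x h₁ h₂ => by
    rcases h₁.eq_or_lt with rfl | h₁
    · exact .refl
    simp only [PTree.size_node] at h₂
    obtain ⟨r, hr, hxr⟩ := natConnected_blkList (t :: ts) (k + 1) x h₁ (by omega)
    rw [PTree.blk_node_cons, blockSet_cons]
    exact (hxr.mono (subset_insert _ _)).tail ⟨_, mem_insert_self _ _,
      List.mem_toFinset.2 (List.mem_cons_of_mem _ hr), by simp⟩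
theorem natConnected_blkList : ∀ (ts : List PTree) (k : ℕ), ∀ x, k ≤ x → x < k + sizeList ts →
    ∃ r ∈ childRoots ts k, NatConnected (blockSet (blkList ts k)) x r
  | [], k => fun x h₁ h₂ => by simp at h₂; omega
  | t :: ts, k => fun x h₁ h₂ => by
    rw [blkList_cons, blockSet_append, childRoots_cons]
    by_cases hx : x < k + t.size
    · exact ⟨k, List.mem_cons_self, (natConnected_blk t k x h₁ hx).mono subset_union_left⟩
    · simp only [sizeList_cons] at h₂
      obtain ⟨r, hr, hxr⟩ := natConnected_blkList ts (k + t.size) x (by omega) (by omega)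
      exact ⟨r, List.mem_cons_of_mem _ hr, hxr.mono subset_union_right⟩
end

theorem isConnNCL_blk {T : PTree} (k : ℕ) (hT : 2 ≤ T.size) :
    IsConnNCL k T.size (blockSet (T.blk k)) := by
  have hΔ := isLinkedFamily_blk T k
  have hconn : ∀ x ∈ Ico k (k + T.size), NatConnected (blockSet (T.blk k)) x k := fun x hx =>
    natConnected_blk T k x (mem_Ico.1 hx).1 (mem_Ico.1 hx).2
  refine ⟨fun B hB => hΔ.nonempty hB, ?_, ?_,
    fun B hB C hC hBC => (hΔ.pairwise hB hC hBC).2.1,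
    fun B hB C hC hBC => (hΔ.pairwise hB hC hBC).card_inter_le_one,
    fun B hB C hC hBC j hj => ?_, fun x hx y hy => (hconn x hx).trans (hconn y hy).symm⟩
  · exact subset_Ico_of_mem_blk T k
  · intro x hx
    by_cases hxk : x = k
    · obtain ⟨B, hB, hkB⟩ := ((hconn (k + 1) (by simp; omega)).symm).exists_mem_of_ne (by omega)
      exact ⟨B, hB, hxk ▸ hkB⟩
    · exact (hconn x hx).exists_mem_of_ne hxk
  · have hjB : j ∈ B ∩ C := hj ▸ mem_singleton_self j
    rw [mem_inter] at hjB
    exact ⟨hΔ.two_le_card B hB, hΔ.two_le_card C hC, (hΔ.pairwise hB hC hBC).1 j hjB.1 hjB.2⟩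

/-! ### A planar tree is determined by its blocks -/

lemma Finset.eq_and_eq_of_union_eq_union {α : Type*} [DecidableEq α] {s t s' t' : Finset α}
    (p : α → Prop) [DecidablePred p] (hs : ∀ x ∈ s, p x) (hs' : ∀ x ∈ s', p x)
    (ht : ∀ x ∈ t, ¬ p x) (ht' : ∀ x ∈ t', ¬ p x) (h : s ∪ t = s' ∪ t') : s = s' ∧ t = t' := by
  have split {u v : Finset α} (hu : ∀ x ∈ u, p x) (hv : ∀ x ∈ v, ¬ p x) :
      (u ∪ v).filter p = u ∧ (u ∪ v).filter (¬ p ·) = v := by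
    rw [filter_union, filter_union, filter_true_of_mem hu, filter_false_of_mem hv,
      filter_false_of_mem fun x hx => not_not.2 (hu x hx), filter_true_of_mem hv]
    exact ⟨union_empty u, empty_union v⟩
  obtain ⟨h₁, h₂⟩ := split hs ht
  rw [h] at h₁ h₂
  exact ⟨h₁.symm.trans (split hs' ht').1, h₂.symm.trans (split hs' ht').2⟩

lemma childRoots_append_cons (t : PTree) (ts : List PTree) (k : ℕ) :
    childRoots (t :: ts) k ++ [k + sizeList (t :: ts)] =
      k :: (childRoots ts (k + t.size) ++ [k + t.size + sizeList ts]) := by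
  simp [add_assoc]

lemma head?_childRoots_append (ts : List PTree) (k : ℕ) :
    (childRoots ts k ++ [k + sizeList ts]).head? = some k := by
  cases ts <;> simp

mutual
theorem blk_injective : ∀ (T T' : PTree) (k : ℕ), T.size = T'.size →
    blockSet (T.blk k) = blockSet (T'.blk k) → T = T'
  | .node [], .node [], _, _, _ => rfl
  | .node [], .node (t :: _), _, hs, _ | .node (t :: _), .node [], _, hs, _ => by
    have := t.one_le_size; simp at hs; omega
  | .node (t :: ts), .node (t' :: ts'), k, hs, h => by
    have hk : ∀ (u : PTree) (us : List PTree), ∀ B ∈ blockSet (blkList (u :: us) (k + 1)),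
        k ∉ B := fun u us B hB hkB => by
      have := mem_Ico.1 (subset_Ico_of_mem_blkList _ _ B hB hkB); omega
    simp only [PTree.blk_node_cons, blockSet_cons, insert_eq] at h
    -- the root block is the only block containing `k`
    obtain ⟨hR, hΔ⟩ := eq_and_eq_of_union_eq_union (k ∈ ·) (by simp) (by simp) (hk t ts)
      (hk t' ts') h
    have hsorted (u : PTree) (us : List PTree) :
        (k :: childRoots (u :: us) (k + 1)).Pairwise (· < ·) :=
      List.pairwise_cons.2 ⟨fun c hc => by have := (bounds_of_mem_childRoots hc).1; omega,
        pairwise_childRoots _ _⟩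
    have hroots := (hsorted t ts).eq_of_mem_iff (hsorted t' ts') fun x => by
      rw [← List.mem_toFinset, singleton_injective hR, List.mem_toFinset]
    simp only [PTree.size_node, add_right_inj] at hs
    rw [blkList_injective (t :: ts) (t' :: ts') (k + 1) (by rw [(List.cons.inj hroots).2, hs]) hΔ]
/-- `childRoots ts k ++ [k + sizeList ts]` lists where the trees of `ts` begin, followed by
where the last one ends. -/
theorem blkList_injective : ∀ (ts ts' : List PTree) (k : ℕ),
    childRoots ts k ++ [k + sizeList ts] = childRoots ts' k ++ [k + sizeList ts'] →
    blockSet (blkList ts k) = blockSet (blkList ts' k) → ts = ts'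
  | [], [], _, _, _ => rfl
  | [], _ :: _, _, hc, _ | _ :: _, [], _, hc, _ => by simp at hc
  | t :: ts, t' :: ts', k, hc, h => by
    rw [childRoots_append_cons, childRoots_append_cons, List.cons.injEq] at hc
    have hsize : t.size = t'.size := by
      have := congrArg List.head? hc.2
      rw [head?_childRoots_append, head?_childRoots_append] at this
      simpa using this
    rw [← hsize] at hc
    simp only [blkList_cons, blockSet_append, ← hsize] at h
    have hrest (us : List PTree) :
        ∀ B ∈ blockSet (blkList us (k + t.size)), ¬ B ⊆ Ico k (k + t.size) := fun B hB hsub => by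
      obtain ⟨x, hx⟩ := (isLinkedFamily_blkList us _).nonempty hB
      have := mem_Ico.1 (hsub hx)
      have := mem_Ico.1 (subset_Ico_of_mem_blkList us _ B hB hx)
      omega
    obtain ⟨h₁, h₂⟩ := eq_and_eq_of_union_eq_union (· ⊆ Ico k (k + t.size))
      (subset_Ico_of_mem_blk t k) (hsize ▸ subset_Ico_of_mem_blk t' k) (hrest ts) (hrest ts') h
    rw [blk_injective t t' k hsize h₁, blkList_injective ts ts' (k + t.size) hc.2 h₂]
end

/-! ### Rebuilding a planar tree from its blocks -/

def nextAbove (s : Finset ℕ) (e c : ℕ) : ℕ :=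
  (insert e (s.filter (c < ·))).min' (insert_nonempty _ _)

section nextAbove

variable {s : Finset ℕ} {e c z : ℕ}

lemma nextAbove_le_end : nextAbove s e c ≤ e :=
  min'_le _ _ (mem_insert_self _ _)

lemma nextAbove_le (hz : z ∈ s) (hcz : c < z) : nextAbove s e c ≤ z :=
  min'_le _ _ (mem_insert_of_mem (mem_filter.2 ⟨hz, hcz⟩))

lemma nextAbove_eq_end_or_mem : nextAbove s e c = e ∨ nextAbove s e c ∈ s := by
  rcases mem_insert.1 (min'_mem (insert e (s.filter (c < ·))) (insert_nonempty _ _)) with h | h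
  exacts [.inl h, .inr (mem_filter.1 h).1]

lemma lt_nextAbove (hce : c < e) : c < nextAbove s e c := by
  refine lt_min'_iff _ _ |>.2 fun y hy => ?_
  rcases mem_insert.1 hy with rfl | hy
  exacts [hce, (mem_filter.1 hy).2]

lemma eq_of_mem_Ico_nextAbove (hz : z ∈ s)
    (hzc : z ∈ Ico c (nextAbove s e c)) : z = c := by
  rw [mem_Ico] at hzc
  by_contra h
  exact absurd (nextAbove_le hz (lt_of_le_of_ne hzc.1 (Ne.symm h))) (not_le.2 hzc.2)

end nextAbove

def blocksIn (Γ : Finset (Finset ℕ)) (c d : ℕ) : Finset (Finset ℕ) :=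
  Γ.filter (· ⊆ Ico c d)

@[simp] lemma mem_blocksIn {Γ : Finset (Finset ℕ)} {c d : ℕ} {C : Finset ℕ} :
    C ∈ blocksIn Γ c d ↔ C ∈ Γ ∧ C ⊆ Ico c d :=
  mem_filter

namespace IsConnNCL

variable {a N c : ℕ} {Γ : Finset (Finset ℕ)} {B₀ B C : Finset ℕ}

lemma linked_of_mem (G : IsConnNCL a N Γ) (hB : B ∈ Γ) (hC : C ∈ Γ) (hBC : B ≠ C) {j : ℕ}
    (hjB : j ∈ B) (hjC : j ∈ C) : 2 ≤ #B ∧ 2 ≤ #C ∧ Xor (IsLeast ↑B j) (IsLeast ↑C j) :=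
  G.inter_eq_singleton B hB C hC hBC j <| eq_singleton_iff_unique_mem.2
    ⟨mem_inter.2 ⟨hjB, hjC⟩, fun _ hy =>
      card_le_one.1 (G.card_inter_le_one B hB C hC hBC) _ hy j (mem_inter.2 ⟨hjB, hjC⟩)⟩

lemma isLeast_of_mem (G : IsConnNCL a N Γ) (hB : B ∈ Γ) (ha : a ∈ B) : IsLeast ↑B a :=
  ⟨ha, fun _ hx => (mem_Ico.1 (G.subset_Ico B hB hx)).1⟩

lemma eq_of_mem (G : IsConnNCL a N Γ) (hB₀ : B₀ ∈ Γ) (ha₀ : a ∈ B₀) (hC : C ∈ Γ) (ha : a ∈ C) :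
    C = B₀ := by
  by_contra hne
  have := (G.linked_of_mem hC hB₀ hne ha ha₀).2.2
  exact (xor_iff_or_and_not_and _ _).1 this |>.2 ⟨G.isLeast_of_mem hC ha, G.isLeast_of_mem hB₀ ha₀⟩

lemma lt_of_mem (G : IsConnNCL a N Γ) (hB₀ : B₀ ∈ Γ) (ha₀ : a ∈ B₀) (hC : C ∈ Γ) (hCB : C ≠ B₀)
    {x : ℕ} (hx : x ∈ C) : a < x :=
  lt_of_le_of_ne (mem_Ico.1 (G.subset_Ico C hC hx)).1 fun h => hCB (G.eq_of_mem hB₀ ha₀ hC (h ▸ hx))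

lemma isLeast_of_mem_rootBlock (G : IsConnNCL a N Γ) (hB₀ : B₀ ∈ Γ) (ha₀ : a ∈ B₀) (hC : C ∈ Γ)
    (hCB : C ≠ B₀) {p : ℕ} (hpC : p ∈ C) (hp : p ∈ B₀) : IsLeast ↑C p := by
  rcases (G.linked_of_mem hC hB₀ hCB hpC hp).2.2 with ⟨h, -⟩ | ⟨h, -⟩
  · exact h
  · have := (G.lt_of_mem hB₀ ha₀ hC hCB hpC).ne'
    exact absurd ((G.isLeast_of_mem hB₀ ha₀).unique h) this.symm

/-- `C` cannot straddle `p`: it would cross `B₀` (as `a < x < p < y`) or meet `B₀` in `p` above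
its least element. -/
lemma lt_of_lt_of_mem_rootBlock (G : IsConnNCL a N Γ) (hB₀ : B₀ ∈ Γ) (ha₀ : a ∈ B₀) (hC : C ∈ Γ)
    (hCB : C ≠ B₀) {p x y : ℕ} (hp : p ∈ B₀) (hx : x ∈ C) (hy : y ∈ C) (hxp : x < p) : y < p := by
  by_contra! hpy
  rcases hpy.eq_or_lt with rfl | hpy
  · exact absurd ((G.isLeast_of_mem_rootBlock hB₀ ha₀ hC hCB hy hp).2 hx) (not_le.2 hxp)
  · exact G.not_crosses B₀ hB₀ C hC hCB.symm
      ⟨a, x, p, y, G.lt_of_mem hB₀ ha₀ hC hCB hx, hxp, hpy, ha₀, hp, hx, hy⟩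


lemma subset_Ico_nextAbove (G : IsConnNCL a N Γ) (hB₀ : B₀ ∈ Γ) (ha₀ : a ∈ B₀) (hC : C ∈ Γ)
    (hCB : C ≠ B₀) (hc : c ∈ B₀) {x : ℕ} (hx : x ∈ C)
    (hxc : x ∈ Ico c (nextAbove B₀ (a + N) c)) : C ⊆ Ico c (nextAbove B₀ (a + N) c) := by
  intro y hy
  rw [mem_Ico] at hxc ⊢
  refine ⟨not_lt.1 fun hyc => ?_, ?_⟩
  · exact absurd (G.lt_of_lt_of_mem_rootBlock hB₀ ha₀ hC hCB hc hy hx hyc) (not_lt.2 hxc.1)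
  · rcases nextAbove_eq_end_or_mem (s := B₀) (e := a + N) (c := c) with h | h
    · rw [h]; exact (mem_Ico.1 (G.subset_Ico C hC hy)).2
    · exact G.lt_of_lt_of_mem_rootBlock hB₀ ha₀ hC hCB h hx hy hxc.2

lemma succ_mem_rootBlock (G : IsConnNCL a N Γ) (hB₀ : B₀ ∈ Γ) (ha₀ : a ∈ B₀) (hN : 2 ≤ N) :
    a + 1 ∈ B₀ := by
  set p := nextAbove B₀ (a + N) a
  have hclosed : ∀ D ∈ Γ, ∀ u ∈ D, ∀ v ∈ D, u ∈ Ioo a p → v ∈ Ioo a p := by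
    intro D hD u hu v hv huI
    rw [mem_Ioo] at huI
    have hDB : D ≠ B₀ := fun h => by
      have := eq_of_mem_Ico_nextAbove (h ▸ hu) (mem_Ico.2 ⟨huI.1.le, huI.2⟩); omega
    have := mem_Ico.1 (G.subset_Ico_nextAbove hB₀ ha₀ hD hDB ha₀ hu
      (mem_Ico.2 ⟨huI.1.le, huI.2⟩) hv)
    exact mem_Ioo.2 ⟨G.lt_of_mem hB₀ ha₀ hD hDB hv, this.2⟩
  have hp : p ≤ a + 1 := by
    by_contra! h
    have := (G.connected (a + 1) (by simp; omega) a (by simp; omega)).of_closed hclosed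
      (mem_Ioo.2 ⟨by omega, h⟩)
    simp at this
  have hap : a < p := lt_nextAbove (by omega)
  rcases nextAbove_eq_end_or_mem (s := B₀) (e := a + N) (c := a) with h | h
  · omega
  · exact (show p = a + 1 by omega) ▸ h

/-- A path from `x` to `a` can leave `[c, nextAbove B₀ (a + N) c)` only through `B₀`, which
meets this interval only in `c`. -/
lemma natConnected_blocksIn (G : IsConnNCL a N Γ) (hB₀ : B₀ ∈ Γ) (ha₀ : a ∈ B₀) (hc : c ∈ B₀)
    (hac : a < c) {x : ℕ} (hx : x ∈ Ico c (nextAbove B₀ (a + N) c)) :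
    NatConnected (blocksIn Γ c (nextAbove B₀ (a + N) c)) x c := by
  have hcx := (mem_Ico.1 hx).1
  have hxN : x < a + N := (mem_Ico.1 hx).2.trans_le nextAbove_le_end
  have hpath := G.connected x (mem_Ico.2 ⟨by omega, hxN⟩) a (mem_Ico.2 ⟨le_rfl, by omega⟩)
  set c' := nextAbove B₀ (a + N) c
  suffices ∀ v, NatConnected Γ x v →
      (v ∈ Ico c c' ∧ NatConnected (blocksIn Γ c c') x v) ∨ NatConnected (blocksIn Γ c c') x c by
    exact (this a hpath).resolve_left fun h => by have := (mem_Ico.1 h.1).1; omega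
  intro v hv
  induction hv with
  | refl => exact .inl ⟨hx, .refl⟩
  | @tail u w _ huw ih =>
    obtain ⟨D, hD, hu, hw⟩ := huw
    rcases ih with ⟨huI, hxu⟩ | h
    · by_cases hDB : D = B₀
      · subst hDB
        exact .inr (eq_of_mem_Ico_nextAbove hu huI ▸ hxu)
      · have hDI := G.subset_Ico_nextAbove hB₀ ha₀ hD hDB hc hu huI
        exact .inl ⟨hDI hw, hxu.tail ⟨D, mem_blocksIn.2 ⟨hD, hDI⟩, hu, hw⟩⟩
    · exact .inr h

lemma blocksIn_nextAbove (G : IsConnNCL a N Γ) (hB₀ : B₀ ∈ Γ) (ha₀ : a ∈ B₀) (hc : c ∈ B₀)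
    (hac : a < c) (hgap : c + 2 ≤ nextAbove B₀ (a + N) c) :
    IsConnNCL c (nextAbove B₀ (a + N) c - c) (blocksIn Γ c (nextAbove B₀ (a + N) c)) := by
  have hconn {x : ℕ} := G.natConnected_blocksIn hB₀ ha₀ hc hac (x := x)
  generalize nextAbove B₀ (a + N) c = c' at hgap hconn ⊢
  obtain ⟨d, rfl⟩ : ∃ d, c' = c + d := ⟨c' - c, by omega⟩
  rw [Nat.add_sub_cancel_left]
  have sub : blocksIn Γ c (c + d) ⊆ Γ := filter_subset _ _
  refine ⟨fun B hB => G.nonempty B (sub hB), fun B hB => (mem_filter.1 hB).2, fun x hx => ?_,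
    fun B hB C hC => G.not_crosses B (sub hB) C (sub hC),
    fun B hB C hC => G.card_inter_le_one B (sub hB) C (sub hC),
    fun B hB C hC => G.inter_eq_singleton B (sub hB) C (sub hC),
    fun x hx y hy => (hconn hx).trans (hconn hy).symm⟩
  by_cases hxc : x = c
  · subst hxc
    exact ((hconn (mem_Ico.2 ⟨by omega, by omega⟩ : x + 1 ∈ _)).symm).exists_mem_of_ne
      (by omega)
  · exact (hconn hx).exists_mem_of_ne hxc

lemma blocksIn_succ_eq_empty (G : IsConnNCL a N Γ) (hB₀ : B₀ ∈ Γ) (ha₀ : a ∈ B₀)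
    (hc : c ∈ B₀) (hac : a < c) : blocksIn Γ c (c + 1) = ∅ := by
  refine filter_false_of_mem fun C hC hCc => ?_
  have hCB : C ≠ B₀ := fun h => by have := mem_Ico.1 (hCc (h ▸ ha₀)); omega
  have hCeq : C = {c} := (G.nonempty C hC).subset_singleton_iff.1 (by simpa using hCc)
  have := (G.linked_of_mem hC hB₀ hCB (hCeq ▸ mem_singleton_self c) hc).1
  simp [hCeq] at this

lemma blocksIn_eq_union (G : IsConnNCL a N Γ) (hB₀ : B₀ ∈ Γ) (ha₀ : a ∈ B₀)
    (hc : c ∈ B₀) (hac : a < c) :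
    blocksIn Γ c (a + N) = blocksIn Γ c (nextAbove B₀ (a + N) c) ∪
      blocksIn Γ (nextAbove B₀ (a + N) c) (a + N) := by
  have hc' : c < nextAbove B₀ (a + N) c :=
    lt_nextAbove (mem_Ico.1 (G.subset_Ico B₀ hB₀ hc)).2
  ext C
  simp only [mem_union, mem_blocksIn]
  constructor
  · rintro ⟨hC, hCI⟩
    have hCB : C ≠ B₀ := fun h => by have := mem_Ico.1 (hCI (h ▸ ha₀)); omega
    by_cases hx : ∃ x ∈ C, x < nextAbove B₀ (a + N) c
    · obtain ⟨x, hx, hxc⟩ := hx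
      exact .inl ⟨hC, G.subset_Ico_nextAbove hB₀ ha₀ hC hCB hc hx
        (mem_Ico.2 ⟨(mem_Ico.1 (hCI hx)).1, hxc⟩)⟩
    · push Not at hx
      exact .inr ⟨hC, fun y hy => mem_Ico.2 ⟨hx y hy, (mem_Ico.1 (hCI hy)).2⟩⟩
  · rintro (⟨hC, hCI⟩ | ⟨hC, hCI⟩)
    · exact ⟨hC, hCI.trans (Ico_subset_Ico_right nextAbove_le_end)⟩
    · exact ⟨hC, hCI.trans (Ico_subset_Ico_left hc'.le)⟩


lemma exists_forest (G : IsConnNCL a N Γ) (hB₀ : B₀ ∈ Γ) (ha₀ : a ∈ B₀)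
    (hsub : ∀ c ∈ B₀, a < c → ∃ t : PTree, t.size = nextAbove B₀ (a + N) c - c ∧
      blockSet (t.blk c) = blocksIn Γ c (nextAbove B₀ (a + N) c))
    {c : ℕ} (hc : (c ∈ B₀ ∧ a < c) ∨ c = a + N) :
    ∃ ts : List PTree, (childRoots ts c).toFinset = B₀.filter (c ≤ ·) ∧
      c + sizeList ts = a + N ∧ blockSet (blkList ts c) = blocksIn Γ c (a + N) := by
  induction h : a + N - c using Nat.strong_induction_on generalizing c with
  | _ m ih =>
  rcases hc with ⟨hc, hac⟩ | rfl
  · set c' := nextAbove B₀ (a + N) c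
    have hcc' : c < c' := lt_nextAbove (mem_Ico.1 (G.subset_Ico B₀ hB₀ hc)).2
    have hc'N : c' ≤ a + N := nextAbove_le_end
    obtain ⟨t, ht, htb⟩ := hsub c hc hac
    have hc' : (c' ∈ B₀ ∧ a < c') ∨ c' = a + N :=
      nextAbove_eq_end_or_mem.elim .inr fun h => .inl ⟨h, by omega⟩
    obtain ⟨ts, hroots, hsize, hblocks⟩ := ih (a + N - c') (by omega) hc' rfl
    have hct : c + t.size = c' := by omega
    refine ⟨t :: ts, ?_, by simp only [sizeList_cons]; omega, ?_⟩
    · ext z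
      simp only [childRoots_cons, hct, List.toFinset_cons, mem_insert, hroots, mem_filter]
      constructor
      · rintro (rfl | ⟨hz, hcz⟩)
        exacts [⟨hc, le_rfl⟩, ⟨hz, by omega⟩]
      · rintro ⟨hz, hcz⟩
        by_cases hzc' : z < c'
        · exact .inl (eq_of_mem_Ico_nextAbove hz (mem_Ico.2 ⟨hcz, hzc'⟩))
        · exact .inr ⟨hz, by omega⟩
    · rw [blkList_cons, blockSet_append, htb, hct, hblocks,
        G.blocksIn_eq_union hB₀ ha₀ hc hac]
  · refine ⟨[], (filter_false_of_mem fun z hz h => ?_).symm, by simp,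
      (filter_false_of_mem fun C hC h => ?_).symm⟩
    · have := (mem_Ico.1 (G.subset_Ico B₀ hB₀ hz)).2; omega
    · exact (G.nonempty C hC).ne_empty (subset_empty.1 (Ico_self (a + N) ▸ h))

theorem exists_blk_eq (G : IsConnNCL a N Γ) (hN : 2 ≤ N) :
    ∃ T : PTree, T.size = N ∧ blockSet (T.blk a) = Γ := by
  induction N using Nat.strong_induction_on generalizing a Γ with
  | _ N ih =>
  obtain ⟨B₀, hB₀, ha₀⟩ := G.cover a (mem_Ico.2 ⟨le_rfl, by omega⟩)
  have hsub : ∀ c ∈ B₀, a < c → ∃ t : PTree, t.size = nextAbove B₀ (a + N) c - c ∧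
      blockSet (t.blk c) = blocksIn Γ c (nextAbove B₀ (a + N) c) := by
    intro c hc hac
    have hcc' : c < nextAbove B₀ (a + N) c :=
      lt_nextAbove (mem_Ico.1 (G.subset_Ico B₀ hB₀ hc)).2
    have hc'N : nextAbove B₀ (a + N) c ≤ a + N := nextAbove_le_end
    by_cases hleaf : nextAbove B₀ (a + N) c = c + 1
    · refine ⟨.node [], by simp [hleaf], ?_⟩
      rw [hleaf, G.blocksIn_succ_eq_empty hB₀ ha₀ hc hac, PTree.blk_leaf, blockSet_nil]
    · exact ih _ (by omega) (G.blocksIn_nextAbove hB₀ ha₀ hc hac (by omega)) (by omega)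
  have ha₁ := G.succ_mem_rootBlock hB₀ ha₀ hN
  obtain ⟨ts, hroots, hsize, hblocks⟩ :=
    G.exists_forest hB₀ ha₀ hsub (c := a + 1) (.inl ⟨ha₁, by omega⟩)
  cases ts with
  | nil => simpa using (Finset.ext_iff.1 hroots (a + 1)).2 (mem_filter.2 ⟨ha₁, le_rfl⟩)
  | cons t ts =>
    refine ⟨.node (t :: ts), by simp only [PTree.size_node]; omega, ?_⟩
    have hroot : insert a (B₀.filter (a + 1 ≤ ·)) = B₀ := by
      ext z
      simp only [mem_insert, mem_filter]
      constructor
      · rintro (rfl | ⟨hz, -⟩)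
        exacts [ha₀, hz]
      · intro hz
        have := (mem_Ico.1 (G.subset_Ico B₀ hB₀ hz)).1
        by_cases hza : z = a
        exacts [.inl hza, .inr ⟨hz, by omega⟩]
    have hrest : blocksIn Γ (a + 1) (a + N) = Γ.erase B₀ := by
      ext C
      simp only [mem_blocksIn, mem_erase]
      constructor
      · rintro ⟨hC, hCI⟩
        exact ⟨fun h => by have := mem_Ico.1 (hCI (h ▸ ha₀)); omega, hC⟩
      · rintro ⟨hCB, hC⟩
        exact ⟨hC, fun x hx => mem_Ico.2 ⟨G.lt_of_mem hB₀ ha₀ hC hCB hx,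
          (mem_Ico.1 (G.subset_Ico C hC hx)).2⟩⟩
    rw [PTree.blk_node_cons, blockSet_cons, hblocks, List.toFinset_cons, hroots, hroot, hrest,
      insert_erase hB₀]

end IsConnNCL

lemma isConnNCL_singleton (a : ℕ) : IsConnNCL a 1 {{a}} where
  nonempty := by simp
  subset_Ico := by simp
  cover := by simp
  not_crosses := by simp
  card_inter_le_one := by simp
  inter_eq_singleton := by simp
  connected := by
    simp only [Nat.Ico_succ_singleton, mem_singleton]
    rintro x rfl y rfl
    exact .refl

lemma IsConnNCL.eq_singleton {a : ℕ} {Γ : Finset (Finset ℕ)} (G : IsConnNCL a 1 Γ) :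
    Γ = {{a}} := by
  have hB : ∀ B ∈ Γ, B = {a} := fun B hB =>
    (G.nonempty B hB).subset_singleton_iff.1 (by simpa using G.subset_Ico B hB)
  obtain ⟨B, hBΓ, -⟩ := G.cover a (by simp)
  exact eq_singleton_iff_unique_mem.2 ⟨hB B hBΓ ▸ hBΓ, hB⟩

lemma isConnNCL_treeBlocks (T : PTree) : IsConnNCL 0 T.size (blockSet (treeBlocks T)) :=
  match T with
  | .node [] => by simpa [treeBlocks] using isConnNCL_singleton 0
  | .node (t :: _) => isConnNCL_blk 0 (by have := t.one_le_size; simp; omega)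

lemma treeBlocks_injective {T T' : PTree} (hs : T.size = T'.size)
    (h : blockSet (treeBlocks T) = blockSet (treeBlocks T')) : T = T' :=
  match T, T' with
  | .node [], .node [] => rfl
  | .node [], .node (t :: _) | .node (t :: _), .node [] => by
    have := t.one_le_size; simp at hs; omega
  | .node (_ :: _), .node (_ :: _) => blk_injective _ _ 0 hs h

lemma IsConnNCL.exists_treeBlocks_eq {N : ℕ} {Γ : Finset (Finset ℕ)} (G : IsConnNCL 0 N Γ)
    (hN : 0 < N) : ∃ T : PTree, T.size = N ∧ blockSet (treeBlocks T) = Γ := by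
  rcases (Nat.one_le_iff_ne_zero.2 hN.ne').eq_or_lt with rfl | hN
  · exact ⟨.node [], by simp, by simp [treeBlocks, G.eq_singleton]⟩
  obtain ⟨T, hT, hblocks⟩ := G.exists_blk_eq hN
  match T with
  | .node [] => simp at hT; omega
  | .node (_ :: _) => exact ⟨_, hT, hblocks⟩

/-! ### Partitions of `Fin n` -/

lemma Finset.min_eq_coe_iff_isLeast {α : Type*} [LinearOrder α] {s : Finset α} {a : α} :
    s.min = a ↔ IsLeast (↑s) a :=
  ⟨fun h => ⟨mem_of_min h, fun _ hb => WithTop.coe_le_coe.1 (h ▸ min_le hb)⟩,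
    fun h => le_antisymm (min_le h.1) (Finset.le_min fun _ hb => WithTop.coe_le_coe.2 (h.2 hb))⟩

section FinBridge

variable {n : ℕ}

def natBlocks (π : Finset (Finset (Fin n))) : Finset (Finset ℕ) :=
  π.image (image Fin.val)

lemma natBlocks_injective : Function.Injective (natBlocks (n := n)) :=
  image_injective (image_injective Fin.val_injective)

lemma crosses_iff_natCrosses {B C : Finset (Fin n)} :
    Crosses B C ↔ NatCrosses (B.image Fin.val) (C.image Fin.val) := by
  constructor
  · rintro ⟨i, k, p, q, hik, hkp, hpq, hi, hp, hk, hq⟩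
    exact ⟨i, k, p, q, hik, hkp, hpq, mem_image_of_mem _ hi, mem_image_of_mem _ hp,
      mem_image_of_mem _ hk, mem_image_of_mem _ hq⟩
  · rintro ⟨_, _, _, _, hik, hkp, hpq, hi', hp', hk', hq'⟩
    obtain ⟨i, hi, rfl⟩ := mem_image.1 hi'
    obtain ⟨p, hp, rfl⟩ := mem_image.1 hp'
    obtain ⟨k, hk, rfl⟩ := mem_image.1 hk'
    obtain ⟨q, hq, rfl⟩ := mem_image.1 hq'
    exact ⟨i, k, p, q, hik, hkp, hpq, hi, hp, hk, hq⟩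

lemma min_eq_iff_isLeast_image_val {B : Finset (Fin n)} {j : Fin n} :
    B.min = (j : WithBot (Fin n)) ↔ IsLeast ((B.image Fin.val : Finset ℕ) : Set ℕ) (j : ℕ) :=
  Finset.min_eq_coe_iff_isLeast.trans
    ⟨fun h => ⟨mem_image_of_mem _ h.1, fun _ hx => by
        obtain ⟨y, hy, rfl⟩ := mem_image.1 hx
        exact h.2 hy⟩,
      fun h => ⟨by obtain ⟨y, hy, hyj⟩ := mem_image.1 h.1; exact Fin.ext hyj ▸ hy,
        fun y hy => h.2 (mem_image_of_mem _ hy)⟩⟩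

lemma connected_iff_natConnected {π : Finset (Finset (Fin n))} {i j : Fin n} :
    Connected π i j ↔ NatConnected (natBlocks π) i j := by
  constructor
  · refine fun h => Relation.ReflTransGen.lift Fin.val (fun u v huv => ?_) i j h
    obtain ⟨B, hB, hu, hv⟩ := huv
    exact ⟨B.image Fin.val, mem_image_of_mem _ hB, mem_image_of_mem _ hu, mem_image_of_mem _ hv⟩
  · suffices ∀ w, NatConnected (natBlocks π) i w → ∀ hw : w < n, Connected π i ⟨w, hw⟩ from
      fun h => this j h j.isLt
    intro w h
    induction h with
    | refl => exact fun _ => .refl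
    | tail _ huv ih =>
      obtain ⟨_, hB', hu', hv'⟩ := huv
      obtain ⟨B, hB, rfl⟩ := mem_image.1 hB'
      obtain ⟨u, hu, rfl⟩ := mem_image.1 hu'
      obtain ⟨v, hv, rfl⟩ := mem_image.1 hv'
      exact fun _ => (ih u.isLt).tail ⟨B, hB, hu, hv⟩

lemma isConnNCL_natBlocks {π : Finset (Finset (Fin n))} (hπ : IsNCL n π)
    (hconn : ∀ i j, Connected π i j) : IsConnNCL 0 n (natBlocks π) := by
  obtain ⟨hne, hcov, hnc, hlink⟩ := hπ
  have hlt {x : ℕ} (hx : x ∈ Ico 0 (0 + n)) : x < n := by simpa using hx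
  have hne' {B C : Finset (Fin n)} (h : B.image Fin.val ≠ C.image Fin.val) : B ≠ C :=
    fun hBC => h (hBC ▸ rfl)
  refine ⟨?_, ?_, fun x hx => ?_, ?_, ?_, ?_, fun x hx y hy =>
    connected_iff_natConnected.1 (hconn ⟨x, hlt hx⟩ ⟨y, hlt hy⟩)⟩
  all_goals simp only [natBlocks, forall_mem_image]
  · exact fun B hB => (hne B hB).image _
  · exact fun B _ x hx => by obtain ⟨y, -, rfl⟩ := mem_image.1 hx; simp
  · obtain ⟨B, hB, hxB⟩ := hcov ⟨x, hlt hx⟩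
    exact ⟨_, mem_image_of_mem _ hB, mem_image_of_mem Fin.val hxB⟩
  · exact fun B hB C hC hBC h => hnc B hB C hC (hne' hBC) (crosses_iff_natCrosses.2 h)
  · intro B hB C hC hBC
    rw [← image_inter _ _ Fin.val_injective, card_image_of_injective _ Fin.val_injective]
    exact (hlink B hB C hC (hne' hBC)).1
  · intro B hB C hC hBC j hj
    rw [← image_inter _ _ Fin.val_injective] at hj
    obtain ⟨j', -, rfl⟩ := mem_image.1 (hj ▸ mem_singleton_self j)
    have := (hlink B hB C hC (hne' hBC)).2 j' <| image_injective Fin.val_injective <| by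
      rw [hj, image_singleton]
    rwa [card_image_of_injective _ Fin.val_injective, card_image_of_injective _ Fin.val_injective,
      ← min_eq_iff_isLeast_image_val, ← min_eq_iff_isLeast_image_val]

lemma IsConnNCL.isNCL_of_natBlocks {π : Finset (Finset (Fin n))}
    (G : IsConnNCL 0 n (natBlocks π)) : IsNCL n π ∧ ∀ i j, Connected π i j := by
  have hmem {B : Finset (Fin n)} (hB : B ∈ π) : B.image Fin.val ∈ natBlocks π :=
    mem_image_of_mem _ hB
  have hne' {B C : Finset (Fin n)} (h : B ≠ C) : B.image Fin.val ≠ C.image Fin.val :=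
    (image_injective Fin.val_injective).ne h
  refine ⟨⟨fun B hB => ?_, fun x => ?_, fun B hB C hC hBC h => ?_, fun B hB C hC hBC => ?_⟩,
    fun i j => connected_iff_natConnected.2 (G.connected i (by simp) j (by simp))⟩
  · obtain ⟨_, hx⟩ := G.nonempty _ (hmem hB)
    obtain ⟨y, hy, -⟩ := mem_image.1 hx
    exact ⟨y, hy⟩
  · obtain ⟨_, hB', hxB'⟩ := G.cover x (by simp)
    obtain ⟨B, hB, rfl⟩ := mem_image.1 hB'
    obtain ⟨y, hy, hyx⟩ := mem_image.1 hxB'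
    exact ⟨B, hB, Fin.ext hyx ▸ hy⟩
  · exact G.not_crosses _ (hmem hB) _ (hmem hC) (hne' hBC) (crosses_iff_natCrosses.1 h)
  · refine ⟨?_, fun j hj => ?_⟩
    · rw [← card_image_of_injective _ Fin.val_injective, image_inter _ _ Fin.val_injective]
      exact G.card_inter_le_one _ (hmem hB) _ (hmem hC) (hne' hBC)
    · have := G.inter_eq_singleton _ (hmem hB) _ (hmem hC) (hne' hBC) j
        (by rw [← image_inter _ _ Fin.val_injective, hj, image_singleton])
      rwa [card_image_of_injective _ Fin.val_injective, card_image_of_injective _ Fin.val_injective,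
        ← min_eq_iff_isLeast_image_val, ← min_eq_iff_isLeast_image_val] at this

lemma cPart_eq_singleton_univ_iff (hn : 0 < n) {π : Finset (Finset (Fin n))} :
    cPart n π = {univ} ↔ ∀ i j, Connected π i j := by
  constructor
  · intro h i j
    have : univ.filter (Connected π i) ∈ cPart n π := mem_image_of_mem _ (mem_univ i)
    rw [h, mem_singleton] at this
    simpa using Finset.ext_iff.1 this j
  · intro hconn
    have : (fun i => univ.filter (Connected π i)) = fun _ => univ :=
      funext fun i => by ext j; simp [hconn i j]
    rw [cPart, this, image_const (univ_nonempty_iff.2 ⟨⟨0, hn⟩⟩)]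

end FinBridge

def treePartition (n : ℕ) (T : PTree) : Finset (Finset (Fin n)) :=
  ((treeBlocks T).map (listToBlock n)).toFinset

section treePartition

variable {n : ℕ} {T : PTree}

lemma image_val_listToBlock {l : List ℕ} (h : ∀ x ∈ l, x < n) :
    (listToBlock n l).image Fin.val = l.toFinset := by
  ext x
  simpa [listToBlock] using h x

lemma natBlocks_treePartition (hT : T.size = n) :
    natBlocks (treePartition n T) = blockSet (treeBlocks T) := by
  have hlt {l : List ℕ} (hl : l ∈ treeBlocks T) : ∀ x ∈ l, x < n := fun x hx => by
    have := (isConnNCL_treeBlocks T).subset_Ico _ (mem_blockSet.2 ⟨l, hl, rfl⟩)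
      (List.mem_toFinset.2 hx)
    simp only [mem_Ico] at this
    omega
  ext B
  simp only [natBlocks, treePartition, mem_image, List.mem_toFinset, List.mem_map, mem_blockSet]
  constructor
  · rintro ⟨_, ⟨l, hl, rfl⟩, rfl⟩
    exact ⟨l, hl, (image_val_listToBlock (hlt hl)).symm⟩
  · rintro ⟨l, hl, rfl⟩
    exact ⟨_, ⟨l, hl, rfl⟩, image_val_listToBlock (hlt hl)⟩

lemma isNCL_treePartition (hT : T.size = n) :
    IsNCL n (treePartition n T) ∧ cPart n (treePartition n T) = {univ} := by
  have := IsConnNCL.isNCL_of_natBlocks <| natBlocks_treePartition hT ▸ hT ▸ isConnNCL_treeBlocks T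
  exact ⟨this.1, (cPart_eq_singleton_univ_iff (hT ▸ T.one_le_size)).2 this.2⟩

lemma treePartition_injOn {T' : PTree} (hT : T.size = n) (hT' : T'.size = n)
    (h : treePartition n T = treePartition n T') : T = T' :=
  treeBlocks_injective (hT.trans hT'.symm) <| by
    rw [← natBlocks_treePartition hT, ← natBlocks_treePartition hT', h]

lemma exists_treePartition_eq (hn : 0 < n) {π : Finset (Finset (Fin n))}
    (hπ : IsNCL n π ∧ cPart n π = {univ}) : ∃ T : PTree, T.size = n ∧ treePartition n T = π := by
  have hconn := (cPart_eq_singleton_univ_iff hn).1 hπ.2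
  obtain ⟨T, hT, hblocks⟩ := (isConnNCL_natBlocks hπ.1 hconn).exists_treeBlocks_eq hn
  exact ⟨T, hT, natBlocks_injective (by rw [natBlocks_treePartition hT, hblocks])⟩

end treePartition

/-- There is a bijection `Θ` between the set `[1_n]` of connected non-crossing linked
partitions of `{1, …, n}` and the set of planar rooted trees with `n` vertices, under
which the blocks of `π` are exactly the vertex sets (a root together with its offsprings)
of the constituent elementary trees of `Θ(π)`, the vertices being numbered in
depth-first (left-first) order. -/
theorem connected_ncl_equiv_ptree (n : ℕ) (hn : 1 ≤ n) :
    ∃ Θ : {π : Finset (Finset (Fin n)) //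
            IsNCL n π ∧ cPart n π = {(Finset.univ : Finset (Fin n))}} ≃
          {T : PTree // T.size = n},
      ∀ π : {π : Finset (Finset (Fin n)) //
            IsNCL n π ∧ cPart n π = {(Finset.univ : Finset (Fin n))}},
        (π.1 : Finset (Finset (Fin n))) =
          ((treeBlocks (Θ π).1).map (listToBlock n)).toFinset := by
  let Φ : {T : PTree // T.size = n} →
      {π : Finset (Finset (Fin n)) // IsNCL n π ∧ cPart n π = {(Finset.univ : Finset (Fin n))}} :=
    fun T => ⟨treePartition n T.1, isNCL_treePartition T.2⟩
  have hΦ : Function.Bijective Φ := by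
    refine ⟨fun T T' h => Subtype.ext (treePartition_injOn T.2 T'.2 (congrArg Subtype.val h)),
      fun π => ?_⟩
    obtain ⟨T, hT, hπ⟩ := exists_treePartition_eq hn π.2
    exact ⟨⟨T, hT⟩, Subtype.ext hπ⟩
  refine ⟨(Equiv.ofBijective Φ hΦ).symm, fun π => ?_⟩
  exact congrArg Subtype.val ((Equiv.ofBijective Φ hΦ).apply_symm_apply π).symm
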